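/- Let N ⊴ G be invariant under endomorphisms φ, ψ of a group G, with G/N finitely generated abelian. If R(φ,ψ) is finite, then Coin(φ̄,ψ̄) is finite, R(φ̄,ψ̄) is finite, and R(φ|_N,ψ|_N) is finite. -/

import Mathlib

/-- The (φ,ψ)-twisted conjugacy relation. -/
def twistRel {G : Type*} [Group G] (φ ψ : G →* G) : G → G → Prop :=
  fun a b => ∃ h : G, a = ψ h * b * (φ h)⁻¹

/-!
Twisted classes of `G` map onto those of `G/N`. On the abelian group `G/N` the (φ̄,ψ̄)-classes
are the cosets of the image of `ψ̄/φ̄`, whose kernel is `Coin(φ̄,ψ̄)`; by rank–nullity over `ℤ`,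
an endomorphism of a finitely generated abelian group with finite cokernel has finite kernel.
Finally, the fibres of `R(φ|_N,ψ|_N) → R(φ,ψ)` are orbits of `Coin(φ̄,ψ̄)` acting by
`[n] ↦ [ψ(g) n φ(g)⁻¹]`, so they are finite as well.
-/

open Function

theorem LinearMap.isTorsion_ker_of_isTorsion_quotient_range {R M : Type*} [CommRing R]
    [IsDomain R] [AddCommGroup M] [Module R M] [Module.Finite R M] (f : M →ₗ[R] M)
    (h : Module.IsTorsion R (M ⧸ LinearMap.range f)) : Module.IsTorsion R (LinearMap.ker f) := by
  rw [← Module.rank_eq_zero_iff_isTorsion] at h ⊢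
  have hrange := (LinearMap.range f).rank_quotient_add_rank
  have hker := f.rank_range_add_rank_ker
  rw [h, zero_add] at hrange
  rw [hrange] at hker
  exact Cardinal.eq_of_add_eq_add_left (hker.trans (add_zero _).symm) (Module.rank_lt_aleph0 R M)

theorem MonoidHom.finite_ker_of_finite_quotient_range {A : Type*} [CommGroup A] [Group.FG A]
    (θ : A →* A) [Finite (A ⧸ θ.range)] : Finite θ.ker := by
  let f := θ.toAdditive.toIntLinearMap
  have : Module.Finite ℤ (Additive A) := Module.Finite.iff_addGroup_fg.mpr inferInstance
  have : Finite (Additive A ⧸ LinearMap.range f) := ‹Finite (A ⧸ θ.range)›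
  have hker := f.isTorsion_ker_of_isTorsion_quotient_range
    (isAddTorsion_iff_isTorsion_int.mp isAddTorsion_of_finite)
  exact Module.finite_of_fg_torsion (LinearMap.ker f) hker

section TwistedConjugacy

variable {G H : Type*} [Group G] [Group H]

theorem twistRel_equivalence (φ ψ : G →* G) : Equivalence (twistRel φ ψ) where
  refl a := ⟨1, by simp⟩
  symm := by
    rintro a b ⟨h, rfl⟩
    exact ⟨h⁻¹, by simp [mul_assoc]⟩
  trans := by
    rintro a b c ⟨h, rfl⟩ ⟨k, rfl⟩
    exact ⟨h * k, by simp [mul_assoc]⟩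

theorem twistRel_of_quot_mk_eq {φ ψ : G →* G} {a b : G}
    (h : Quot.mk (twistRel φ ψ) a = Quot.mk _ b) : twistRel φ ψ a b :=
  (twistRel_equivalence φ ψ).eqvGen_iff.mp (Quot.eqvGen_exact h)

theorem twistRel.map (f : G →* H) {φ ψ : G →* G} {φ' ψ' : H →* H} (hφ : Semiconj f φ φ')
    (hψ : Semiconj f ψ ψ') {a b : G} (h : twistRel φ ψ a b) : twistRel φ' ψ' (f a) (f b) := by
  obtain ⟨g, rfl⟩ := h
  exact ⟨f g, by simp [hφ.eq, hψ.eq]⟩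

theorem finite_quot_twistRel_of_surjective (f : G →* H) (hf : Surjective f) {φ ψ : G →* G}
    {φ' ψ' : H →* H} (hφ : Semiconj f φ φ') (hψ : Semiconj f ψ ψ')
    [Finite (Quot (twistRel φ ψ))] : Finite (Quot (twistRel φ' ψ')) := by
  refine Finite.of_surjective (Quot.map f fun _ _ => twistRel.map f hφ hψ) ?_
  rintro ⟨y⟩
  obtain ⟨x, rfl⟩ := hf y
  exact ⟨Quot.mk _ x, rfl⟩

end TwistedConjugacy

section CommGroup

variable {A : Type*} [CommGroup A]

theorem twistRel_iff_div_mem_range (φ ψ : A →* A) {a b : A} :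
    twistRel φ ψ a b ↔ a / b ∈ (ψ / φ).range := by
  constructor
  · rintro ⟨h, rfl⟩
    exact ⟨h, by rw [MonoidHom.div_apply, mul_right_comm, mul_div_cancel_right, div_eq_mul_inv]⟩
  · rintro ⟨h, hh⟩
    exact ⟨h, by rw [mul_right_comm, ← div_eq_mul_inv, ← MonoidHom.div_apply, hh, div_mul_cancel]⟩

theorem finite_quotient_range_div_of_finite_quot_twistRel (φ ψ : A →* A)
    [Finite (Quot (twistRel φ ψ))] : Finite (A ⧸ (ψ / φ).range) := by
  refine Finite.of_surjective (Quot.lift ((↑) : A → A ⧸ (ψ / φ).range)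
    fun _ _ h => QuotientGroup.eq_iff_div_mem.mpr ((twistRel_iff_div_mem_range φ ψ).mp h)) ?_
  intro q
  obtain ⟨a, rfl⟩ := QuotientGroup.mk_surjective q
  exact ⟨Quot.mk _ a, rfl⟩

theorem finite_coin_of_finite_quot_twistRel [Group.FG A] (φ ψ : A →* A)
    [Finite (Quot (twistRel φ ψ))] : Finite {x // φ x = ψ x} := by
  have := finite_quotient_range_div_of_finite_quot_twistRel φ ψ
  have := (ψ / φ).finite_ker_of_finite_quotient_range
  exact Finite.of_equiv (ψ / φ).ker (Equiv.subtypeEquivRight fun x => by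
    rw [MonoidHom.mem_ker, MonoidHom.div_apply, div_eq_one, eq_comm])

end CommGroup

section Restriction

variable {G : Type*} [Group G] {N : Subgroup G} {φ ψ : G →* G}

abbrev MonoidHom.restrictEnd (φ : G →* G) (hφ : N ≤ N.comap φ) : N →* N :=
  (φ.domRestrict N).codRestrict N fun x => hφ x.2

variable [N.Normal] (hφ : N ≤ N.comap φ) (hψ : N ≤ N.comap ψ)

theorem twist_mem_iff_map_eq {n : G} (hn : n ∈ N) (g : G) :
    ψ g * n * (φ g)⁻¹ ∈ N ↔ QuotientGroup.map N N φ hφ g = QuotientGroup.map N N ψ hψ g := by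
  rw [← QuotientGroup.eq_one_iff, QuotientGroup.mk_mul, QuotientGroup.mk_mul,
    QuotientGroup.mk_inv, (QuotientGroup.eq_one_iff n).mpr hn, mul_one, mul_inv_eq_one, eq_comm]
  rfl

theorem twistRel_restrictEnd_of_mk_eq {x : G} {n m : N} {g g' : G}
    (hn : (n : G) = ψ g * x * (φ g)⁻¹) (hm : (m : G) = ψ g' * x * (φ g')⁻¹)
    (hgg' : (g : G ⧸ N) = g') :
    twistRel (φ.restrictEnd hφ) (ψ.restrictEnd hψ) n m := by
  refine ⟨⟨g / g', QuotientGroup.eq_iff_div_mem.mp hgg'⟩, Subtype.ext ?_⟩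
  change (n : G) = ψ (g / g') * m * (φ (g / g'))⁻¹
  rw [hn, hm, map_div, map_div]
  simp [div_eq_mul_inv, mul_assoc]

theorem finite_quot_twistRel_restrictEnd [Finite (Quot (twistRel φ ψ))]
    [Finite {x : G ⧸ N // QuotientGroup.map N N φ hφ x = QuotientGroup.map N N ψ hψ x}] :
    Finite (Quot (twistRel (φ.restrictEnd hφ) (ψ.restrictEnd hψ))) := by
  let ι : Quot (twistRel (φ.restrictEnd hφ) (ψ.restrictEnd hψ)) → Quot (twistRel φ ψ) :=
    Quot.map N.subtype fun _ _ => twistRel.map N.subtype (fun _ => rfl) (fun _ => rfl)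
  rw [← Set.finite_univ_iff]
  refine Set.Finite.of_finite_fibers ι (Set.toFinite _) ?_
  rintro _ ⟨⟨n₀⟩, -, rfl⟩
  let orbit (c : {x : G ⧸ N // QuotientGroup.map N N φ hφ x = QuotientGroup.map N N ψ hψ x}) :
      Quot (twistRel (φ.restrictEnd hφ) (ψ.restrictEnd hψ)) :=
    Quot.mk _ ⟨ψ c.1.out * n₀ * (φ c.1.out)⁻¹,
      (twist_mem_iff_map_eq hφ hψ n₀.2 _).mpr (by simpa only [QuotientGroup.out_eq'] using c.2)⟩
  -- the fibre through `[n₀]` is covered by the `Coin(φ̄,ψ̄)`-orbit of `[n₀]`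
  refine (Set.finite_range orbit).subset ?_
  rintro ⟨n⟩ ⟨-, hn⟩
  obtain ⟨g, hg⟩ := twistRel_of_quot_mk_eq hn
  refine ⟨⟨g, (twist_mem_iff_map_eq hφ hψ n₀.2 g).mp (hg ▸ n.2)⟩, Quot.sound ?_⟩
  exact twistRel_restrictEnd_of_mk_eq hφ hψ rfl hg (QuotientGroup.out_eq' _)

end Restriction

/-- if N ⊴ G is (φ,ψ)-invariant with G/N finitely generated abelian and
    R(φ,ψ) < ∞, then Coin(φ̄,ψ̄), R(φ̄,ψ̄) and R(φ|_N,ψ|_N) are all finite. -/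
theorem reidNr_finite_consequences {G : Type*} [Group G] (N : Subgroup G) [N.Normal]
    (φ ψ : G →* G) (hφ : N ≤ N.comap φ) (hψ : N ≤ N.comap ψ)
    (hab : ∀ x y : G ⧸ N, x * y = y * x) (hfg : Group.FG (G ⧸ N))
    (hR : Finite (Quot (twistRel φ ψ))) :
    Finite {x : G ⧸ N // QuotientGroup.map N N φ hφ x = QuotientGroup.map N N ψ hψ x} ∧
    Finite (Quot (twistRel (QuotientGroup.map N N φ hφ) (QuotientGroup.map N N ψ hψ))) ∧
    Finite (Quot (twistRel
      ((φ.domRestrict N).codRestrict N (fun x => hφ x.2))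
      ((ψ.domRestrict N).codRestrict N (fun x => hψ x.2)))) := by
  have hquot :
      Finite (Quot (twistRel (QuotientGroup.map N N φ hφ) (QuotientGroup.map N N ψ hψ))) :=
    finite_quot_twistRel_of_surjective (QuotientGroup.mk' N) (QuotientGroup.mk'_surjective N)
      (fun _ => rfl) (fun _ => rfl)
  have hcoin :
      Finite {x : G ⧸ N // QuotientGroup.map N N φ hφ x = QuotientGroup.map N N ψ hψ x} := by
    let _ : CommGroup (G ⧸ N) := { mul_comm := hab }
    exact finite_coin_of_finite_quot_twistRel _ _
  exact ⟨hcoin, hquot, finite_quot_twistRel_restrictEnd hφ hψ⟩
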